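/- Fix c₀ ≠ 0 and let 𝔥 ∈ C¹([−1, 1]) be positive, even (𝔥(−t) = 𝔥(t) for all t), and increasing on [0, 1] (so 𝔥'(t) ≥ 0 for t ∈ [0, 1] and 𝔥'(t) ≤ 0 for t ∈ [−1, 0]). Define F₂(u, v) := 2𝔥(v)u² − (u + c₀²v²)·√(u(1 − v²) − c₀²v²) on the open set Ω := {(u, v) ∈ ℝ² : u > 0, v²(u + c₀²) < u} (on which u(1 − v²) − c₀²v² > 0). Then 0 is a regular value of F₂ on Ω: at every (u, v) ∈ Ω with F₂(u, v) = 0, the gradient (∂F₂/∂u, ∂F₂/∂v)(u, v) is nonzero. -/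

import Mathlib

/-!
At a critical zero of `F₂`, write `a = c₀²` and `s = √(u(1 - v²) - a v²)`. Eliminating `𝔥(v)`
between `F₂ = 0` and `∂F₂/∂u = 0` gives `(u + 3av²) s² = av²(u + av²)`. Multiplying
`∂F₂/∂v = 0` by `v s` and using `v 𝔥'(v) ≥ 0` (𝔥 is even and increasing on `[0, 1]`) gives
`v²(u + a)(u + av²) ≤ 2av² s²`. Substituting the first relation into the second forces `v = 0`,
and then the first relation reads `u s² = 0`, which is impossible.
-/

open Set

lemma deriv_nonneg_of_monotoneOn_Icc {f : ℝ → ℝ} {a b x : ℝ} (hab : a < b)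
    (hf : MonotoneOn f (Icc a b)) (hx : x ∈ Icc a b) (hd : DifferentiableAt ℝ f x) :
    0 ≤ deriv f x := by
  rw [← hd.derivWithin (uniqueDiffOn_Icc hab x hx)]
  exact hf.derivWithin_nonneg

lemma deriv_nonpos_of_antitoneOn_Icc {f : ℝ → ℝ} {a b x : ℝ} (hab : a < b)
    (hf : AntitoneOn f (Icc a b)) (hx : x ∈ Icc a b) (hd : DifferentiableAt ℝ f x) :
    deriv f x ≤ 0 := by
  rw [← hd.derivWithin (uniqueDiffOn_Icc hab x hx)]
  exact hf.derivWithin_nonpos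

lemma MonotoneOn.antitoneOn_Icc_neg_of_even {f : ℝ → ℝ} {b : ℝ}
    (heven : ∀ t ∈ Icc (-b) b, f (-t) = f t) (hf : MonotoneOn f (Icc 0 b)) :
    AntitoneOn f (Icc (-b) 0) := by
  intro x hx y hy hxy
  rw [← heven x ⟨hx.1, by linarith [hx.1, hx.2]⟩, ← heven y ⟨hy.1, by linarith [hy.1, hy.2]⟩]
  exact hf ⟨neg_nonneg.2 hy.2, neg_le.1 hy.1⟩ ⟨neg_nonneg.2 hx.2, neg_le.1 hx.1⟩ (neg_le_neg hxy)

lemma mul_deriv_nonneg_of_even_of_monotoneOn {f : ℝ → ℝ} {b x : ℝ}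
    (heven : ∀ t ∈ Icc (-b) b, f (-t) = f t) (hf : MonotoneOn f (Icc 0 b))
    (hx : x ∈ Icc (-b) b) (hd : DifferentiableAt ℝ f x) :
    0 ≤ x * deriv f x := by
  rcases lt_trichotomy x 0 with hneg | rfl | hpos
  · exact mul_nonneg_of_nonpos_of_nonpos hneg.le <|
      deriv_nonpos_of_antitoneOn_Icc (by linarith [hx.1]) (hf.antitoneOn_Icc_neg_of_even heven)
        ⟨hx.1, hneg.le⟩ hd
  · simp
  · exact mul_nonneg hpos.le <|
      deriv_nonneg_of_monotoneOn_Icc (hpos.trans_le hx.2) hf ⟨hpos.le, hx.2⟩ hd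

/-- Here `a = c₀²`, `s = √(u(1 - v²) - a v²)`, `h = 𝔥(v)` and `h' = 𝔥'(v)`; `hF`, `hFu`, `hFv`
say that `F₂` and its two partial derivatives vanish at `(u, v)`. -/
lemma helicoidal_critical_zero_absurd {a u v s h h' : ℝ} (ha : 0 ≤ a) (hu : 0 < u) (hs : 0 < s)
    (hs2 : s ^ 2 = u * (1 - v ^ 2) - a * v ^ 2) (hsign : 0 ≤ v * h')
    (hF : 2 * h * u ^ 2 = (u + a * v ^ 2) * s)
    (hFu : 4 * h * u - s - (u + a * v ^ 2) * (1 - v ^ 2) / (2 * s) = 0)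
    (hFv : 2 * h' * u ^ 2 - 2 * a * v * s + (u + a * v ^ 2) * v * (u + a) / s = 0) :
    False := by
  have hFu' : 8 * h * u * s - 2 * s ^ 2 - (u + a * v ^ 2) * (1 - v ^ 2) = 0 := by
    field_simp at hFu; linear_combination hFu
  have hFv' : 2 * h' * u ^ 2 * s - 2 * a * v * s ^ 2 + (u + a * v ^ 2) * v * (u + a) = 0 := by
    field_simp at hFv; linear_combination hFv
  have key : (u + 3 * a * v ^ 2) * s ^ 2 = a * v ^ 2 * (u + a * v ^ 2) := by
    linear_combination u * hFu' - 4 * s * hF - (u + a * v ^ 2) * hs2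
  have hineq : v ^ 2 * (u + a) * (u + a * v ^ 2) ≤ 2 * a * v ^ 2 * s ^ 2 := by
    have : 0 ≤ (v * h') * (2 * u ^ 2 * s) := mul_nonneg hsign (by positivity)
    linear_combination this + v * hFv'
  have hv :
      v ^ 2 * ((u + a * v ^ 2) * (u ^ 2 + 3 * a * u * v ^ 2 + a * u + a ^ 2 * v ^ 2)) ≤ 0 := by
    linear_combination (u + 3 * a * v ^ 2) * hineq + 2 * a * v ^ 2 * key
  obtain rfl : v = 0 := (sq_nonpos_iff v).1 (nonpos_of_mul_nonpos_left hv (by positivity))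
  have : 0 < u * s ^ 2 := by positivity
  linarith

section Helicoidal

variable (c₀ : ℝ) (𝔥 : ℝ → ℝ) {u v : ℝ}

noncomputable def helicoidalF₂ (u v : ℝ) : ℝ :=
  2 * 𝔥 v * u ^ 2 - (u + c₀ ^ 2 * v ^ 2) * √(u * (1 - v ^ 2) - c₀ ^ 2 * v ^ 2)

lemma hasDerivAt_helicoidalF₂_fst (hR : 0 < u * (1 - v ^ 2) - c₀ ^ 2 * v ^ 2) :
    HasDerivAt (fun u ↦ helicoidalF₂ c₀ 𝔥 u v)
      (4 * 𝔥 v * u - √(u * (1 - v ^ 2) - c₀ ^ 2 * v ^ 2)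
        - (u + c₀ ^ 2 * v ^ 2) * (1 - v ^ 2) / (2 * √(u * (1 - v ^ 2) - c₀ ^ 2 * v ^ 2))) u := by
  have hsqrt := (((hasDerivAt_id' u).mul_const (1 - v ^ 2)).sub_const (c₀ ^ 2 * v ^ 2)).sqrt hR.ne'
  refine (((hasDerivAt_pow 2 u).const_mul (2 * 𝔥 v)).fun_sub
    (((hasDerivAt_id' u).add_const (c₀ ^ 2 * v ^ 2)).fun_mul hsqrt)).congr_deriv ?_
  push_cast
  ring

lemma hasDerivAt_helicoidalF₂_snd {h' : ℝ} (hR : 0 < u * (1 - v ^ 2) - c₀ ^ 2 * v ^ 2)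
    (h𝔥 : HasDerivAt 𝔥 h' v) :
    HasDerivAt (fun v ↦ helicoidalF₂ c₀ 𝔥 u v)
      (2 * h' * u ^ 2 - 2 * c₀ ^ 2 * v * √(u * (1 - v ^ 2) - c₀ ^ 2 * v ^ 2)
        + (u + c₀ ^ 2 * v ^ 2) * v * (u + c₀ ^ 2) / √(u * (1 - v ^ 2) - c₀ ^ 2 * v ^ 2)) v := by
  have hsq := (hasDerivAt_pow 2 v).const_mul (c₀ ^ 2)
  have hsqrt := (((hasDerivAt_pow 2 v).const_sub 1).const_mul u |>.fun_sub hsq).sqrt hR.ne'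
  refine (((h𝔥.const_mul 2).mul_const (u ^ 2)).fun_sub
    (((hasDerivAt_const v u).fun_add hsq).fun_mul hsqrt)).congr_deriv ?_
  have hs : √(u * (1 - v ^ 2) - c₀ ^ 2 * v ^ 2) ≠ 0 := (Real.sqrt_pos.2 hR).ne'
  field_simp
  push_cast
  ring

lemma helicoidalF₂_partials_ne_zero_of_eq_zero (heven : ∀ t ∈ Icc (-1 : ℝ) 1, 𝔥 (-t) = 𝔥 t)
    (hmono : MonotoneOn 𝔥 (Icc 0 1)) (hv : v ∈ Icc (-1) 1) (hdiff : DifferentiableAt ℝ 𝔥 v)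
    (hu : 0 < u) (hR : 0 < u * (1 - v ^ 2) - c₀ ^ 2 * v ^ 2) (hF : helicoidalF₂ c₀ 𝔥 u v = 0) :
    (deriv (fun u ↦ helicoidalF₂ c₀ 𝔥 u v) u, deriv (fun v ↦ helicoidalF₂ c₀ 𝔥 u v) v) ≠
      (0, 0) := by
  intro hcrit
  rw [Prod.mk.injEq, (hasDerivAt_helicoidalF₂_fst c₀ 𝔥 hR).deriv,
    (hasDerivAt_helicoidalF₂_snd c₀ 𝔥 hR hdiff.hasDerivAt).deriv] at hcrit
  exact helicoidal_critical_zero_absurd (sq_nonneg c₀) hu (Real.sqrt_pos.2 hR) (Real.sq_sqrt hR.le)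
    (mul_deriv_nonneg_of_even_of_monotoneOn heven hmono hv hdiff) (sub_eq_zero.1 hF)
    hcrit.1 hcrit.2

end Helicoidal

theorem helicoidal_F2_regular_value (c₀ : ℝ) (𝔥 : ℝ → ℝ)
    (hC1 : ContDiffOn ℝ 1 𝔥 (Set.Icc (-1) 1))
    (heven : ∀ t ∈ Set.Icc (-1 : ℝ) 1, 𝔥 (-t) = 𝔥 t)
    (hmono : MonotoneOn 𝔥 (Set.Icc 0 1)) :
    let F₂ : ℝ → ℝ → ℝ := fun u v =>
      2 * 𝔥 v * u ^ 2
        - (u + c₀ ^ 2 * v ^ 2) * Real.sqrt (u * (1 - v ^ 2) - c₀ ^ 2 * v ^ 2)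
    let Ω : Set (ℝ × ℝ) := {p | 0 < p.1 ∧ p.2 ^ 2 * (p.1 + c₀ ^ 2) < p.1}
    ∀ p ∈ Ω,
      0 < p.1 * (1 - p.2 ^ 2) - c₀ ^ 2 * p.2 ^ 2 ∧
      (F₂ p.1 p.2 = 0 →
        (deriv (fun u => F₂ u p.2) p.1, deriv (fun v => F₂ p.1 v) p.2)
          ≠ ((0 : ℝ), (0 : ℝ))) := by
  rintro F₂ Ω ⟨u, v⟩ ⟨hu, hΩ⟩
  have hR : 0 < u * (1 - v ^ 2) - c₀ ^ 2 * v ^ 2 := by linarith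
  have hv : v ∈ Ioo (-1) 1 := by
    rw [mem_Ioo, ← abs_lt, ← sq_lt_one_iff_abs_lt_one]
    nlinarith [mul_nonneg (sq_nonneg v) (sq_nonneg c₀)]
  have hdiff : DifferentiableAt ℝ 𝔥 v :=
    (hC1.differentiableOn one_ne_zero).differentiableAt (Icc_mem_nhds hv.1 hv.2)
  exact ⟨hR, helicoidalF₂_partials_ne_zero_of_eq_zero c₀ 𝔥 heven hmono (Ioo_subset_Icc_self hv)
    hdiff hu hR⟩
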